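/- In the setting of the projection onto safe forests: for every scale assignment n, P^n is a forest projection. More precisely, if 𝒮 is a forest with P^n[𝒮] = 𝒮 and if one defines 𝒢 = {T ∈ Div : {T} ∪ 𝒮 is a forest and int^n_𝒮(T) > ext^n_𝒮(T)}, then 𝒢 ⊔ 𝒮 is again a forest, and (P^n)⁻¹[𝒮] is exactly the interval [𝒮, 𝒢 ⊔ 𝒮] = {ℱ : 𝒮 ⊆ ℱ ⊆ 𝒢 ⊔ 𝒮}. -/

import Mathlib

variable {V ε : Type*}

/-- `ℰ^int(S)`: edges with all endpoints in the node set `S`. -/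
def Eint (inc : ε → Set V) (S : Set V) : Set ε := {e | inc e ⊆ S}

/-- `ℰ^ext(S)`: edges touching but not inside `S`. -/
def Eext (inc : ε → Set V) (S : Set V) : Set ε :=
  {e | ¬ inc e ⊆ S ∧ (inc e ∩ S).Nonempty}

/-- `C_ℱ(S)`: the maximal elements of `ℱ` strictly contained in `S`. -/
def childrenF (F : Set (Set V)) (S : Set V) : Set (Set V) :=
  {T | T ∈ F ∧ T ⊂ S ∧ ∀ U ∈ F, T ⊂ U → ¬ U ⊂ S}

/-- `ℰ^int_ℱ(S) = ℰ^int(S) \ ⋃_{T ∈ C_ℱ(S)} ℰ^int(T)`. -/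
def EintF (inc : ε → Set V) (F : Set (Set V)) (S : Set V) : Set ε :=
  Eint inc S \ ⋃ T ∈ childrenF F S, Eint inc T

/-- `ℰ^ext_ℱ(S) = ℰ^ext(S) ∩ ℰ^int(A_ℱ(S))`, where `A_ℱ(S)` is the minimal element of
`ℱ` strictly containing `S` (the intersection over all strict supersets in `ℱ`,
which for a laminar finite family equals `ℰ^int` of the immediate ancestor, and is
everything when there is no ancestor). -/
def EextF (inc : ε → Set V) (F : Set (Set V)) (S : Set V) : Set ε :=
  Eext inc S ∩ ⋂ T ∈ {T | T ∈ F ∧ S ⊂ T}, Eint inc T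

/-- `int^n_ℱ(S)`: the minimum scale over internal edges modulo `ℱ`. -/
noncomputable def intScale (inc : ε → Set V) (n : ε → ℕ) (F : Set (Set V))
    (S : Set V) : ℕ :=
  sInf (n '' EintF inc F S)

/-- `ext^n_ℱ(S)`: the maximum scale over external edges modulo `ℱ`. -/
noncomputable def extScale (inc : ε → Set V) (n : ε → ℕ) (F : Set (Set V))
    (S : Set V) : ℕ :=
  sSup (n '' EextF inc F S)

/-- `P^n[ℱ]`: the projection onto safe forests. -/
noncomputable def safeProj (inc : ε → Set V) (n : ε → ℕ) (F : Set (Set V)) :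
    Set (Set V) :=
  {S ∈ F | intScale inc n F S ≤ extScale inc n F S}


/-- A forest of divergent subtrees: a subset of `Div` whose members are pairwise
nested or disjoint. -/
def IsForestIn (Div : Set (Set V)) (F : Set (Set V)) : Prop :=
  F ⊆ Div ∧ ∀ S ∈ F, ∀ T ∈ F, S ⊆ T ∨ T ⊆ S ∨ S ∩ T = ∅

/-- `𝒢`: the divergent trees compatible with `𝒮` that are dangerous for the scale
assignment `n`, i.e. `int^n_𝒮(T) > ext^n_𝒮(T)`. -/
noncomputable def dangerousExt (inc : ε → Set V) (n : ε → ℕ) (Div : Set (Set V))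
    (S : Set (Set V)) : Set (Set V) :=
  {T ∈ Div | IsForestIn Div (insert T S) ∧ extScale inc n S T < intScale inc n S T}

/-! If `U ∈ G` is unsafe (`ext^n_G(U) < int^n_G(U)`), adding `U` to `G` changes neither
`int^n` nor `ext^n` of any tree `S` compatible with `G ∪ {U}`. The only edges that can leave
`ℰ^int_G(S)` are internal edges of a new child `U` of `S`, and a crossing edge `f` from `U`
to `S` (given by `hcross`) stays in `ℰ^int(S)` with `n f ≤ ext(U) < int(U)`, so the minimum
does not move; dually for a new parent `U` of `S` and `ℰ^ext(S)`. Adding the trees of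
`ℱ \ 𝒮` one at a time therefore shows that int and ext relative to `ℱ` and to `𝒮` agree,
whether unsafety is assumed relative to `ℱ` (when `P^n[ℱ] = 𝒮`) or relative to `𝒮` (when
`ℱ ⊆ 𝒢 ⊔ 𝒮`); this gives both inclusions of the preimage description. Two overlapping
dangerous trees `A`, `B` are ruled out by crossing edges in both directions (`hover`):
`int(A) ≤ ext(B) < int(B) ≤ ext(A) < int(A)`. -/

open Set

section ForestScales

variable {inc : ε → Set V} {n : ε → ℕ} {Div F G : Set (Set V)} {A B S U : Set V} {e : ε}

lemma IsForestIn.mono (h : IsForestIn Div G) (hFG : F ⊆ G) : IsForestIn Div F :=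
  ⟨hFG.trans h.1, fun S hS T hT => h.2 S (hFG hS) T (hFG hT)⟩

lemma IsForestIn.nested_or_disjoint (h : IsForestIn Div G) (hFG : F ⊆ G) (hS : S ∈ G) :
    ∀ T ∈ F, T ⊆ S ∨ S ⊆ T ∨ T ∩ S = ∅ :=
  fun T hT => h.2 T (hFG hT) S hS

lemma exists_mem_childrenF_superset (hF : F.Finite) {T : Set V} (hT : T ∈ F) (hTS : T ⊂ S) :
    ∃ C ∈ childrenF F S, T ⊆ C := by
  obtain ⟨C, hC, hmax⟩ := Finite.exists_maximalFor id {W | W ∈ F ∧ T ⊆ W ∧ W ⊂ S}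
    (hF.subset fun W hW => hW.1) ⟨T, hT, subset_rfl, hTS⟩
  refine ⟨C, ⟨hC.1, hC.2.2, fun W hW hCW hWS => ?_⟩, hC.2.1⟩
  exact hCW.2 (hmax ⟨hW, hC.2.1.trans hCW.subset, hWS⟩ hCW.subset)

lemma mem_EintF_of_forall (heS : inc e ⊆ S) (heF : ∀ T ∈ F, T ⊂ S → ¬ inc e ⊆ T) :
    e ∈ EintF inc F S := by
  refine ⟨heS, ?_⟩
  simp only [mem_iUnion₂, not_exists]
  exact fun T hT => heF T hT.1 hT.2.1

lemma mem_EintF_iff (hF : F.Finite) :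
    e ∈ EintF inc F S ↔ inc e ⊆ S ∧ ∀ T ∈ F, T ⊂ S → ¬ inc e ⊆ T := by
  refine ⟨fun ⟨heS, hch⟩ => ⟨heS, fun T hT hTS heT => ?_⟩,
    fun h => mem_EintF_of_forall h.1 h.2⟩
  obtain ⟨C, hC, hTC⟩ := exists_mem_childrenF_superset hF hT hTS
  exact hch (mem_iUnion₂.2 ⟨C, hC, heT.trans hTC⟩)

lemma mem_EextF_iff :
    e ∈ EextF inc F S ↔ e ∈ Eext inc S ∧ ∀ T ∈ F, S ⊂ T → inc e ⊆ T := by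
  simp [EextF, Eint]

lemma EintF_anti (hG : G.Finite) (hFG : F ⊆ G) : EintF inc G S ⊆ EintF inc F S := fun _ he =>
  let ⟨heS, heG⟩ := (mem_EintF_iff hG).1 he
  mem_EintF_of_forall heS fun T hT => heG T (hFG hT)

lemma EextF_anti (hFG : F ⊆ G) : EextF inc G S ⊆ EextF inc F S := fun _ he =>
  let ⟨heS, heG⟩ := mem_EextF_iff.1 he
  mem_EextF_iff.2 ⟨heS, fun T hT => heG T (hFG hT)⟩

lemma intScale_le (he : e ∈ EintF inc F S) : intScale inc n F S ≤ n e :=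
  Nat.sInf_le ⟨e, he, rfl⟩

lemma le_extScale [Finite ε] (he : e ∈ EextF inc F S) : n e ≤ extScale inc n F S :=
  le_csSup (toFinite _).bddAbove ⟨e, he, rfl⟩

lemma intScale_insert_self (hG : G.Finite) :
    intScale inc n (insert U G) U = intScale inc n G U := by
  have : EintF inc (insert U G) U = EintF inc G U := by
    ext e
    simp [mem_EintF_iff hG, mem_EintF_iff (hG.insert U)]
  rw [intScale, intScale, this]

lemma extScale_insert_self : extScale inc n (insert U G) U = extScale inc n G U := by
  have : EextF inc (insert U G) U = EextF inc G U := by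
    ext e
    simp [mem_EextF_iff]
  rw [extScale, extScale, this]

lemma mem_EintF_and_EextF_of_crossing (hA : ∀ T ∈ F, T ⊆ A ∨ A ⊆ T ∨ T ∩ A = ∅)
    (hB : ∀ T ∈ F, T ⊆ B ∨ B ⊆ T ∨ T ∩ B = ∅) (hgap : ∀ T ∈ F, B ⊂ T → ¬ T ⊂ A)
    (heA : e ∈ Eint inc A) (heB : e ∈ Eext inc B) :
    e ∈ EintF inc F A ∧ e ∈ EextF inc F B := by
  obtain ⟨heB_out, v, hve, hvB⟩ := heB
  refine ⟨mem_EintF_of_forall heA fun T hT hTA heT => ?_,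
    mem_EextF_iff.2 ⟨⟨heB_out, v, hve, hvB⟩, fun T hT hBT => ?_⟩⟩
  · rcases hB T hT with hTB | hBT | hTB
    · exact heB_out (heT.trans hTB)
    · rcases hBT.eq_or_ssubset with rfl | hBT
      · exact heB_out heT
      · exact hgap T hT hBT hTA
    · exact eq_empty_iff_forall_notMem.1 hTB v ⟨heT hve, hvB⟩
  · rcases hA T hT with hTA | hAT | hTA
    · rcases hTA.eq_or_ssubset with rfl | hTA
      · exact heA
      · exact absurd hTA (hgap T hT hBT)
    · exact heA.trans hAT
    · exact absurd hTA (nonempty_iff_ne_empty.1 ⟨v, hBT.subset hvB, heA hve⟩)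

lemma intScale_le_extScale_of_crossing [Finite ε]
    (hA : ∀ T ∈ F, T ⊆ A ∨ A ⊆ T ∨ T ∩ A = ∅)
    (hB : ∀ T ∈ F, T ⊆ B ∨ B ⊆ T ∨ T ∩ B = ∅) (hgap : ∀ T ∈ F, B ⊂ T → ¬ T ⊂ A)
    (heA : e ∈ Eint inc A) (heB : e ∈ Eext inc B) :
    intScale inc n F A ≤ extScale inc n F B :=
  have he := mem_EintF_and_EextF_of_crossing hA hB hgap heA heB
  (intScale_le he.1).trans (le_extScale he.2)

lemma ssubset_of_mem_EintF_diff_insert (hG : G.Finite)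
    (he : e ∈ EintF inc G S \ EintF inc (insert U G) S) :
    U ⊂ S ∧ (∀ T ∈ insert U G, U ⊂ T → ¬ T ⊂ S) ∧ e ∈ EintF inc G U := by
  obtain ⟨he, he'⟩ := he
  rw [mem_EintF_iff hG] at he
  rw [mem_EintF_iff (hG.insert U)] at he'
  obtain ⟨heS, heG⟩ := he
  push Not at he'
  obtain ⟨T, hT | hT, hTS, heT⟩ := he' heS
  · subst hT
    refine ⟨hTS, ?_, mem_EintF_of_forall heT fun W hW hWT => heG W hW (hWT.trans hTS)⟩
    rintro W (rfl | hW) hTW hWS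
    · exact hTW.ne rfl
    · exact heG W hW hWS (heT.trans hTW.subset)
  · exact absurd heT (heG T hT hTS)

lemma ssubset_of_mem_EextF_diff_insert (he : e ∈ EextF inc G S \ EextF inc (insert U G) S) :
    S ⊂ U ∧ (∀ T ∈ insert U G, S ⊂ T → ¬ T ⊂ U) ∧ e ∈ EextF inc G U := by
  obtain ⟨he, he'⟩ := he
  rw [mem_EextF_iff] at he he'
  obtain ⟨⟨heS_out, heS_meet⟩, heG⟩ := he
  push Not at he'
  obtain ⟨T, hT | hT, hST, heT⟩ := he' ⟨heS_out, heS_meet⟩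
  · subst hT
    have heT_meet := heS_meet.mono (inter_subset_inter_right _ hST.subset)
    refine ⟨hST, ?_, mem_EextF_iff.2 ⟨⟨heT, heT_meet⟩, fun W hW hTW => heG W hW (hST.trans hTW)⟩⟩
    rintro W (rfl | hW) hSW hWT
    · exact hWT.ne rfl
    · exact heT ((heG W hW hSW).trans hWT.subset)
  · exact absurd (heG T hT hST) heT

variable (hcross : ∀ S ∈ Div, ∀ T ∈ Div, S ⊂ T → (Eext inc S ∩ Eint inc T).Nonempty)
include hcross

lemma intScale_insert_of_unsafe [Finite ε] (hG : G.Finite)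
    (hF : IsForestIn Div (insert S (insert U G)))
    (hU : extScale inc n G U < intScale inc n G U) :
    intScale inc n (insert U G) S = intScale inc n G S := by
  refine csInf_eq_csInf_of_forall_exists_le ?_ ?_
  · rintro _ ⟨e, he, rfl⟩
    exact ⟨n e, ⟨e, EintF_anti (hG.insert U) (subset_insert _ _) he, rfl⟩, le_rfl⟩
  · rintro _ ⟨e, he, rfl⟩
    by_cases he' : e ∈ EintF inc (insert U G) S
    · exact ⟨n e, ⟨e, he', rfl⟩, le_rfl⟩
    obtain ⟨hUS, hgap, heU⟩ := ssubset_of_mem_EintF_diff_insert hG ⟨he, he'⟩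
    obtain ⟨f, hfU, hfS⟩ := hcross U (hF.1 (by simp)) S (hF.1 (by simp)) hUS
    obtain ⟨hfS', hfU'⟩ := mem_EintF_and_EextF_of_crossing
      (hF.nested_or_disjoint (subset_insert _ _) (mem_insert _ _))
      (hF.nested_or_disjoint (subset_insert _ _) (by simp)) hgap hfS hfU
    refine ⟨n f, ⟨f, hfS', rfl⟩, ?_⟩
    calc n f ≤ extScale inc n G U := le_extScale (EextF_anti (subset_insert _ _) hfU')
      _ ≤ intScale inc n G U := hU.le
      _ ≤ n e := intScale_le heU

lemma extScale_insert_of_unsafe [Finite ε] (hG : G.Finite)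
    (hF : IsForestIn Div (insert S (insert U G)))
    (hU : extScale inc n G U < intScale inc n G U) :
    extScale inc n (insert U G) S = extScale inc n G S := by
  refine csSup_eq_csSup_of_forall_exists_le ?_ ?_
  · rintro _ ⟨e, he, rfl⟩
    exact ⟨n e, ⟨e, EextF_anti (subset_insert _ _) he, rfl⟩, le_rfl⟩
  · rintro _ ⟨e, he, rfl⟩
    by_cases he' : e ∈ EextF inc (insert U G) S
    · exact ⟨n e, ⟨e, he', rfl⟩, le_rfl⟩
    obtain ⟨hSU, hgap, heU⟩ := ssubset_of_mem_EextF_diff_insert ⟨he, he'⟩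
    obtain ⟨f, hfS, hfU⟩ := hcross S (hF.1 (by simp)) U (hF.1 (by simp)) hSU
    obtain ⟨hfU', hfS'⟩ := mem_EintF_and_EextF_of_crossing
      (hF.nested_or_disjoint (subset_insert _ _) (by simp))
      (hF.nested_or_disjoint (subset_insert _ _) (mem_insert _ _)) hgap hfU hfS
    refine ⟨n f, ⟨f, hfS', rfl⟩, ?_⟩
    calc n e ≤ extScale inc n G U := le_extScale heU
      _ ≤ intScale inc n G U := hU.le
      _ ≤ n f := intScale_le (EintF_anti (hG.insert U) (subset_insert _ _) hfU')

lemma scales_insert_of_unsafe [Finite ε] (hG : G.Finite)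
    (hF : IsForestIn Div (insert S (insert U G)))
    (hU : extScale inc n G U < intScale inc n G U) :
    intScale inc n (insert U G) S = intScale inc n G S ∧
      extScale inc n (insert U G) S = extScale inc n G S :=
  ⟨intScale_insert_of_unsafe hcross hG hF hU, extScale_insert_of_unsafe hcross hG hF hU⟩

end ForestScales

section Projection

variable {inc : ε → Set V} {n : ε → ℕ} {Div F 𝒮 D : Set (Set V)}
  (hcross : ∀ S ∈ Div, ∀ T ∈ Div, S ⊂ T → (Eext inc S ∩ Eint inc T).Nonempty)
include hcross

lemma scales_union_eq_of_unsafe [Finite ε] (h𝒮 : 𝒮.Finite) (hD : D.Finite)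
    (hF : IsForestIn Div (D ∪ 𝒮))
    (hunsafe : ∀ U ∈ D, extScale inc n (D ∪ 𝒮) U < intScale inc n (D ∪ 𝒮) U)
    (S : Set V) (hS : IsForestIn Div (insert S (D ∪ 𝒮))) :
    intScale inc n (D ∪ 𝒮) S = intScale inc n 𝒮 S ∧
      extScale inc n (D ∪ 𝒮) S = extScale inc n 𝒮 S := by
  induction D, hD using Finite.induction_on generalizing S with
  | empty => simp
  | @insert a t _ ht ih =>
    rw [insert_union] at hF hunsafe hS ⊢
    have hG : (t ∪ 𝒮).Finite := ht.union h𝒮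
    have ha : extScale inc n (t ∪ 𝒮) a < intScale inc n (t ∪ 𝒮) a := by
      rw [← extScale_insert_self, ← intScale_insert_self hG]
      exact hunsafe a (mem_insert _ _)
    have hstep := fun (S : Set V) (hS : IsForestIn Div (insert S (insert a (t ∪ 𝒮)))) =>
      scales_insert_of_unsafe hcross (n := n) hG hS ha
    have hunsafe' : ∀ U ∈ t, extScale inc n (t ∪ 𝒮) U < intScale inc n (t ∪ 𝒮) U := by
      intro U hU
      have hUF : U ∈ insert a (t ∪ 𝒮) := mem_insert_of_mem _ (mem_union_left _ hU)
      obtain ⟨hint, hext⟩ := hstep U (by rwa [insert_eq_of_mem hUF])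
      rw [← hint, ← hext]
      exact hunsafe U (mem_insert_of_mem _ hU)
    obtain ⟨hint, hext⟩ := hstep S hS
    obtain ⟨hint', hext'⟩ := ih (hF.mono (subset_insert _ _)) hunsafe' S
      (hS.mono (insert_subset_insert (subset_insert _ _)))
    exact ⟨hint.trans hint', hext.trans hext'⟩

lemma scales_union_eq_of_dangerous [Finite ε] (h𝒮 : 𝒮.Finite) (hD : D.Finite)
    (hF : IsForestIn Div (D ∪ 𝒮))
    (hdanger : ∀ U ∈ D, extScale inc n 𝒮 U < intScale inc n 𝒮 U)
    (S : Set V) (hS : IsForestIn Div (insert S (D ∪ 𝒮))) :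
    intScale inc n (D ∪ 𝒮) S = intScale inc n 𝒮 S ∧
      extScale inc n (D ∪ 𝒮) S = extScale inc n 𝒮 S := by
  induction D, hD using Finite.induction_on generalizing S with
  | empty => simp
  | @insert a t _ ht ih =>
    rw [insert_union] at hF hS ⊢
    have ih := ih (hF.mono (subset_insert _ _)) fun U hU => hdanger U (mem_insert_of_mem _ hU)
    have ha : extScale inc n (t ∪ 𝒮) a < intScale inc n (t ∪ 𝒮) a := by
      obtain ⟨hint, hext⟩ := ih a hF
      rw [hint, hext]
      exact hdanger a (mem_insert _ _)
    obtain ⟨hint, hext⟩ := scales_insert_of_unsafe hcross (ht.union h𝒮) hS ha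
    obtain ⟨hint', hext'⟩ := ih S (hS.mono (insert_subset_insert (subset_insert _ _)))
    exact ⟨hint.trans hint', hext.trans hext'⟩

lemma subset_dangerousExt_union_of_safeProj_eq [Finite ε] (hFfin : F.Finite)
    (hF : IsForestIn Div F) (hproj : safeProj inc n F = 𝒮) :
    F ⊆ dangerousExt inc n Div 𝒮 ∪ 𝒮 := by
  have h𝒮F : 𝒮 ⊆ F := hproj.symm.subset.trans (sep_subset _ _)
  have hunsafe : ∀ U ∈ F \ 𝒮, extScale inc n F U < intScale inc n F U :=
    fun U hU => lt_of_not_ge fun hsafe => hU.2 (hproj ▸ ⟨hU.1, hsafe⟩)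
  have key := scales_union_eq_of_unsafe hcross (hFfin.subset h𝒮F) hFfin.sdiff
    (n := n) (D := F \ 𝒮)
  rw [sdiff_union_of_subset h𝒮F] at key
  intro T hT
  by_cases hT𝒮 : T ∈ 𝒮
  · exact Or.inr hT𝒮
  refine Or.inl ⟨hF.1 hT, hF.mono (insert_subset hT h𝒮F), ?_⟩
  obtain ⟨hint, hext⟩ := key hF hunsafe T (by rwa [insert_eq_of_mem hT])
  rw [← hint, ← hext]
  exact hunsafe T ⟨hT, hT𝒮⟩

lemma safeProj_eq_of_subset_dangerousExt_union [Finite ε] (hFfin : F.Finite)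
    (hF : IsForestIn Div F) (h𝒮F : 𝒮 ⊆ F) (hF𝒢 : F ⊆ dangerousExt inc n Div 𝒮 ∪ 𝒮)
    (hfix : safeProj inc n 𝒮 = 𝒮) :
    safeProj inc n F = 𝒮 := by
  have hdanger : ∀ U ∈ F \ 𝒮, extScale inc n 𝒮 U < intScale inc n 𝒮 U :=
    fun U hU => ((hF𝒢 hU.1).resolve_right hU.2).2.2
  have key := scales_union_eq_of_dangerous hcross (hFfin.subset h𝒮F) hFfin.sdiff
    (n := n) (D := F \ 𝒮)
  rw [sdiff_union_of_subset h𝒮F] at key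
  have hsafe : ∀ S ∈ F, intScale inc n F S ≤ extScale inc n F S ↔ S ∈ 𝒮 := by
    intro S hS
    obtain ⟨hint, hext⟩ := key hF hdanger S (by rwa [insert_eq_of_mem hS])
    rw [hint, hext]
    refine ⟨fun hle => by_contra fun hS𝒮 => (hdanger S ⟨hS, hS𝒮⟩).not_ge hle, fun hS𝒮 => ?_⟩
    exact (hfix.symm ▸ hS𝒮 : S ∈ safeProj inc n 𝒮).2
  ext S
  exact ⟨fun h => (hsafe S h.1).1 h.2, fun h => ⟨h𝒮F h, (hsafe S (h𝒮F h)).2 h⟩⟩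

end Projection

section Dangerous

variable {inc : ε → Set V} {n : ε → ℕ} {Div 𝒮 : Set (Set V)} {A B : Set V}
  (hover : ∀ S ∈ Div, ∀ T ∈ Div, (S \ T).Nonempty → (T \ S).Nonempty →
    (S ∩ T).Nonempty → (Eint inc S ∩ Eext inc T).Nonempty)
include hover

lemma nested_or_disjoint_of_mem_dangerousExt [Finite ε] (hA : A ∈ dangerousExt inc n Div 𝒮)
    (hB : B ∈ dangerousExt inc n Div 𝒮) : A ⊆ B ∨ B ⊆ A ∨ A ∩ B = ∅ := by
  by_contra! h
  obtain ⟨hAB, hBA, hAB'⟩ := h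
  have hAc := hA.2.1.nested_or_disjoint (subset_insert _ _) (mem_insert _ _)
  have hBc := hB.2.1.nested_or_disjoint (subset_insert _ _) (mem_insert _ _)
  obtain ⟨e, heA, heB⟩ := hover A hA.1 B hB.1 (sdiff_nonempty.2 hAB) (sdiff_nonempty.2 hBA) hAB'
  obtain ⟨f, hfB, hfA⟩ := hover B hB.1 A hA.1 (sdiff_nonempty.2 hBA) (sdiff_nonempty.2 hAB)
    (by rwa [inter_comm])
  have hAB_le : intScale inc n 𝒮 A ≤ extScale inc n 𝒮 B :=
    intScale_le_extScale_of_crossing hAc hBc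
      (fun _ _ hBT hTA => hBA (hBT.subset.trans hTA.subset)) heA heB
  have hBA_le : intScale inc n 𝒮 B ≤ extScale inc n 𝒮 A :=
    intScale_le_extScale_of_crossing hBc hAc
      (fun _ _ hAT hTB => hAB (hAT.subset.trans hTB.subset)) hfB hfA
  exact lt_irrefl _ ((hAB_le.trans_lt (hB.2.2.trans_le hBA_le)).trans hA.2.2)

lemma isForestIn_dangerousExt_union [Finite ε] (h𝒮 : IsForestIn Div 𝒮) :
    IsForestIn Div (dangerousExt inc n Div 𝒮 ∪ 𝒮) := by
  refine ⟨union_subset (fun T hT => hT.1) h𝒮.1, ?_⟩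
  rintro A (hA | hA) B (hB | hB)
  · exact nested_or_disjoint_of_mem_dangerousExt hover hA hB
  · exact hA.2.1.2 A (mem_insert _ _) B (mem_insert_of_mem _ hB)
  · exact hB.2.1.2 A (mem_insert_of_mem _ hA) B (mem_insert _ _)
  · exact h𝒮.2 A hA B hB

end Dangerous

theorem safeProj_is_forest_projection_general [Finite ε] (inc : ε → Set V) (n : ε → ℕ)
    (Div : Set (Set V)) (hDivFin : Div.Finite)
    (hcross : ∀ S ∈ Div, ∀ T ∈ Div, S ⊂ T → (Eext inc S ∩ Eint inc T).Nonempty)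
    (hover : ∀ S ∈ Div, ∀ T ∈ Div, (S \ T).Nonempty → (T \ S).Nonempty →
      (S ∩ T).Nonempty → (Eint inc S ∩ Eext inc T).Nonempty)
    (𝒮 : Set (Set V)) (h𝒮 : IsForestIn Div 𝒮) (hfix : safeProj inc n 𝒮 = 𝒮) :
    IsForestIn Div (dangerousExt inc n Div 𝒮 ∪ 𝒮) ∧
      ∀ F : Set (Set V),
        (IsForestIn Div F ∧ safeProj inc n F = 𝒮) ↔
          (IsForestIn Div F ∧ 𝒮 ⊆ F ∧ F ⊆ dangerousExt inc n Div 𝒮 ∪ 𝒮) := by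
  refine ⟨isForestIn_dangerousExt_union hover h𝒮, fun F => ⟨?_, ?_⟩⟩
  · rintro ⟨hF, hproj⟩
    exact ⟨hF, hproj.symm.subset.trans (sep_subset _ _),
      subset_dangerousExt_union_of_safeProj_eq hcross (hDivFin.subset hF.1) hF hproj⟩
  · rintro ⟨hF, h𝒮F, hF𝒢⟩
    exact ⟨hF, safeProj_eq_of_subset_dangerousExt_union hcross (hDivFin.subset hF.1) hF h𝒮F hF𝒢
      hfix⟩

/-- `P^n` is a forest projection: if `𝒮` is a forest with
`P^n[𝒮] = 𝒮` and `𝒢` is the set of dangerous trees compatible with `𝒮`, then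
`𝒢 ⊔ 𝒮` is again a forest and the preimage `(P^n)⁻¹[𝒮]` (within forests of
divergent subtrees) is exactly the interval `[𝒮, 𝒢 ⊔ 𝒮]`. -/
theorem safeProj_is_forest_projection [Finite ε] (inc : ε → Set V) (n : ε → ℕ)
    (Div : Set (Set V)) (hDivFin : Div.Finite)
    (hcross : ∀ S ∈ Div, ∀ T ∈ Div, S ⊂ T → (Eext inc S ∩ Eint inc T).Nonempty)
    (hext : ∀ S ∈ Div, (Eext inc S).Nonempty)
    (hover : ∀ S ∈ Div, ∀ T ∈ Div, (S \ T).Nonempty → (T \ S).Nonempty →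
      (S ∩ T).Nonempty → (Eint inc S ∩ Eext inc T).Nonempty)
    (𝒮 : Set (Set V)) (h𝒮 : IsForestIn Div 𝒮) (hfix : safeProj inc n 𝒮 = 𝒮) :
    IsForestIn Div (dangerousExt inc n Div 𝒮 ∪ 𝒮) ∧
      ∀ F : Set (Set V),
        (IsForestIn Div F ∧ safeProj inc n F = 𝒮) ↔
          (IsForestIn Div F ∧ 𝒮 ⊆ F ∧ F ⊆ dangerousExt inc n Div 𝒮 ∪ 𝒮) :=
  safeProj_is_forest_projection_general inc n Div hDivFin hcross hover 𝒮 h𝒮 hfix
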